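/- arXiv:2204.04273 — 2 statements merged into one kernel-verified Lean document; each statement's English description precedes it below -/
import Mathlib

section
/- For every W ∈ ℝ^{m₁m₂×n₁n₂} and every k ≥ 1, the minimal squared-Frobenius error of approximating W by a sum of k Kronecker products equals the minimal squared-Frobenius error of approximating the rearrangement ℛ(W) by a matrix of rank at most k; that is, min over all L^{(j)} ∈ ℝ^{m₁×n₁}, R^{(j)} ∈ ℝ^{m₂×n₂} (j=1,…,k) of ‖W − Σ_{j=1}^k L^{(j)} ⊗ R^{(j)}‖_F² equals min over all M ∈ ℝ^{m₁n₁×m₂n₂} with rank(M) ≤ k of ‖ℛ(W) − M‖_F², and both minima are attained. -/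
open Matrix Kronecker

/-- The rearrangement `ℛ(W) ∈ ℝ^{m₁n₁×m₂n₂}` of `W ∈ ℝ^{m₁m₂×n₁n₂}`, defined entrywise by
`ℛ(W)_{(i₁,j₁),(i₂,j₂)} = W_{(i₁,i₂),(j₁,j₂)}`. -/
def rearrange {m₁ m₂ n₁ n₂ : ℕ} (W : Matrix (Fin m₁ × Fin m₂) (Fin n₁ × Fin n₂) ℝ) :
    Matrix (Fin m₁ × Fin n₁) (Fin m₂ × Fin n₂) ℝ :=
  fun p q => W (p.1, q.1) (p.2, q.2)

/-- The Frobenius norm: the square root of the sum of squared entries. -/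
noncomputable def frob {m n : Type*} [Fintype m] [Fintype n] (A : Matrix m n ℝ) : ℝ :=
  Real.sqrt (∑ i, ∑ j, (A i j) ^ 2)

/-!
The rearrangement `ℛ` only permutes entries, so it preserves the Frobenius norm, and it sends
`∑ⱼ Lⱼ ⊗ Rⱼ` to the product `A * B` of the `m₁n₁ × k` matrix whose columns are the vectorised
`Lⱼ` and the `k × m₂n₂` matrix whose rows are the vectorised `Rⱼ`. Such products are exactly the
matrices of rank at most `k`, so the two sets of errors coincide. The minimum is attained because
rank is lower semicontinuous: the matrices of rank at most `k` form a closed set, and in a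
finite-dimensional space the distance to a nonempty closed set is attained.
-/

open Module

namespace Matrix

theorem exists_mul_eq_of_rank_le {K m n : Type*} [Field K] [Fintype n]
    {M : Matrix m n K} {k : ℕ} (h : M.rank ≤ k) :
    ∃ (A : Matrix m (Fin k) K) (B : Matrix (Fin k) n K), M = A * B := by
  classical
  set V := LinearMap.range M.mulVecLin
  obtain ⟨f, hf⟩ := finrank_le_iff_exists_linearMap.1
    (show finrank K V ≤ finrank K (Fin k → K) by simpa [Matrix.rank] using h)
  -- `M` factors through its column space `V`, which embeds into `K^k` with a linear retraction.
  obtain ⟨g, hgf⟩ := f.exists_leftInverse_of_injective (LinearMap.ker_eq_bot.2 hf)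
  refine ⟨LinearMap.toMatrix' (V.subtype ∘ₗ g),
    LinearMap.toMatrix' (f ∘ₗ M.mulVecLin.rangeRestrict), ?_⟩
  rw [← LinearMap.toMatrix'_comp, LinearMap.comp_assoc, ← LinearMap.comp_assoc _ f g, hgf,
    LinearMap.id_comp, LinearMap.subtype_comp_codRestrict, ← Matrix.toLin'_apply',
    LinearMap.toMatrix'_toLin']

theorem rank_le_iff_exists_mul_eq {K m n : Type*} [Field K] [Fintype n]
    (M : Matrix m n K) (k : ℕ) :
    M.rank ≤ k ↔ ∃ (A : Matrix m (Fin k) K) (B : Matrix (Fin k) n K), M = A * B :=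
  ⟨exists_mul_eq_of_rank_le, fun ⟨A, B, hM⟩ =>
    hM ▸ (rank_mul_le_left A B).trans ((rank_le_card_width A).trans_eq (Fintype.card_fin k))⟩

theorem isClosed_setOf_rank_le {𝕜 m n : Type*} [NontriviallyNormedField 𝕜] [CompleteSpace 𝕜]
    [Fintype m] [Fintype n] (k : ℕ) :
    IsClosed {M : Matrix m n 𝕜 | M.rank ≤ k} := by
  classical
  let T : Matrix m n 𝕜 →ₗ[𝕜] (n → 𝕜) →L[𝕜] (m → 𝕜) :=
    LinearMap.toContinuousLinearMap.toLinearMap ∘ₗ Matrix.toLin'.toLinearMap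
  have hopen := (isOpen_setOfPred_nat_le_rank (k + 1)).preimage T.continuous_of_finiteDimensional
  convert hopen.isClosed_compl using 1
  ext M
  change finrank 𝕜 (LinearMap.range M.mulVecLin) ≤ k ↔
    ¬ ((k + 1 : ℕ) : Cardinal) ≤ Module.rank 𝕜 (LinearMap.range M.mulVecLin)
  rw [← finrank_eq_rank, Nat.cast_le, not_le, Nat.lt_succ_iff]

end Matrix

section Frobenius

variable {m n : Type*} [Fintype m] [Fintype n]

attribute [local instance] Matrix.frobeniusNormedAddCommGroup Matrix.frobeniusNormedSpace

theorem frob_eq_norm (A : Matrix m n ℝ) : frob A = ‖A‖ := by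
  simp [frob, Matrix.frobenius_norm_def, Real.sqrt_eq_rpow]

theorem exists_isLeast_frob_sub_sq {S : Set (Matrix m n ℝ)} (hS : IsClosed S)
    (hne : S.Nonempty) (A : Matrix m n ℝ) :
    ∃ v, IsLeast {e | ∃ M ∈ S, e = frob (A - M) ^ 2} v := by
  obtain ⟨M, hMS, hM⟩ := hS.exists_infDist_eq_dist hne A
  refine ⟨frob (A - M) ^ 2, ⟨M, hMS, rfl⟩, ?_⟩
  rintro _ ⟨N, hNS, rfl⟩
  simp only [frob_eq_norm, ← dist_eq_norm, ← hM]
  gcongr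
  · exact Metric.infDist_nonneg
  · exact Metric.infDist_le_dist_of_mem hNS

end Frobenius

section Rearrangement

variable {m₁ m₂ n₁ n₂ : ℕ}

theorem frob_rearrange (A : Matrix (Fin m₁ × Fin m₂) (Fin n₁ × Fin n₂) ℝ) :
    frob (rearrange A) = frob A := by
  simp only [frob, rearrange, Fintype.sum_prod_type]
  exact congrArg _ (Finset.sum_congr rfl fun _ _ => Finset.sum_comm)

theorem rearrange_sum_kronecker {k : ℕ} (Ls : Fin k → Matrix (Fin m₁) (Fin n₁) ℝ)
    (Rs : Fin k → Matrix (Fin m₂) (Fin n₂) ℝ) :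
    rearrange (∑ j, Ls j ⊗ₖ Rs j) =
      of (fun p j => Ls j p.1 p.2) * of (fun j q => Rs j q.1 q.2) := by
  ext p q
  simp [rearrange, Matrix.sum_apply, Matrix.mul_apply]

theorem rank_le_iff_exists_rearrange_sum_kronecker
    (M : Matrix (Fin m₁ × Fin n₁) (Fin m₂ × Fin n₂) ℝ) (k : ℕ) :
    M.rank ≤ k ↔ ∃ (Ls : Fin k → Matrix (Fin m₁) (Fin n₁) ℝ)
      (Rs : Fin k → Matrix (Fin m₂) (Fin n₂) ℝ), rearrange (∑ j, Ls j ⊗ₖ Rs j) = M := by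
  rw [M.rank_le_iff_exists_mul_eq]
  constructor
  · rintro ⟨A, B, rfl⟩
    exact ⟨fun j => of fun i₁ j₁ => A (i₁, j₁) j, fun j => of fun i₂ j₂ => B j (i₂, j₂),
      rearrange_sum_kronecker _ _⟩
  · rintro ⟨Ls, Rs, rfl⟩
    exact ⟨_, _, rearrange_sum_kronecker Ls Rs⟩

end Rearrangement

theorem kronecker_sum_min_eq_lowrank_min_general {m₁ m₂ n₁ n₂ : ℕ}
    (W : Matrix (Fin m₁ × Fin m₂) (Fin n₁ × Fin n₂) ℝ) (k : ℕ) :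
    ∃ v : ℝ,
      IsLeast {e : ℝ | ∃ (Ls : Fin k → Matrix (Fin m₁) (Fin n₁) ℝ)
          (Rs : Fin k → Matrix (Fin m₂) (Fin n₂) ℝ),
          e = frob (W - ∑ j, Ls j ⊗ₖ Rs j) ^ 2} v ∧
      IsLeast {e : ℝ | ∃ M : Matrix (Fin m₁ × Fin n₁) (Fin m₂ × Fin n₂) ℝ,
          M.rank ≤ k ∧ e = frob (rearrange W - M) ^ 2} v := by
  obtain ⟨v, hv⟩ := exists_isLeast_frob_sub_sq (isClosed_setOf_rank_le k) ⟨0, by simp⟩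
    (rearrange W)
  refine ⟨v, ?_, hv⟩
  convert hv using 2
  ext e
  simp only [Set.mem_ofPred_eq, rank_le_iff_exists_rearrange_sum_kronecker]
  constructor
  · rintro ⟨Ls, Rs, rfl⟩
    exact ⟨_, ⟨Ls, Rs, rfl⟩, by rw [← frob_rearrange]; rfl⟩
  · rintro ⟨_, ⟨Ls, Rs, rfl⟩, rfl⟩
    exact ⟨Ls, Rs, by rw [← frob_rearrange]; rfl⟩

/-- For every `W ∈ ℝ^{m₁m₂×n₁n₂}` and every `k ≥ 1`, the minimal squared-Frobenius error of
approximating `W` by a sum of `k` Kronecker products equals the minimal squared-Frobenius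
error of approximating the rearrangement `ℛ(W)` by a matrix of rank at most `k`; both minima
are attained. -/
theorem kronecker_sum_min_eq_lowrank_min {m₁ m₂ n₁ n₂ : ℕ}
    (W : Matrix (Fin m₁ × Fin m₂) (Fin n₁ × Fin n₂) ℝ) (k : ℕ) (hk : 1 ≤ k) :
    ∃ v : ℝ,
      IsLeast {e : ℝ | ∃ (Ls : Fin k → Matrix (Fin m₁) (Fin n₁) ℝ)
          (Rs : Fin k → Matrix (Fin m₂) (Fin n₂) ℝ),
          e = frob (W - ∑ j, Ls j ⊗ₖ Rs j) ^ 2} v ∧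
      IsLeast {e : ℝ | ∃ M : Matrix (Fin m₁ × Fin n₁) (Fin m₂ × Fin n₂) ℝ,
          M.rank ≤ k ∧ e = frob (rearrange W - M) ^ 2} v :=
  kronecker_sum_min_eq_lowrank_min_general W k
end

section
/- For every W ∈ ℝ^{m₁m₂×n₁n₂}, letting r = rank(ℛ(W)), there exist matrices L^{(i)} ∈ ℝ^{m₁×n₁} and R^{(i)} ∈ ℝ^{m₂×n₂}, i = 1,…,r, such that W = Σ_{i=1}^r L^{(i)} ⊗ R^{(i)} exactly; consequently, for every a ∈ ℝ^{n₁n₂}, W a = vec(Σ_{i=1}^r R^{(i)} · mat(a) · L^{(i)ᵀ}). -/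
/-!
The rearrangement `ℛ` is a relabelling of entries that turns a Kronecker product `L ⊗ R`
into the rank-one matrix with entries `L i₁ j₁ * R i₂ j₂` at `((i₁, j₁), (i₂, j₂))`. Hence a
rank factorization `ℛ(W) = A B` with inner dimension `rank ℛ(W)` is, read column by column
of `A` and row by row of `B`, a decomposition `W = ∑ᵢ L⁽ⁱ⁾ ⊗ R⁽ⁱ⁾`; the formula for `W a`
is then the identity `(L ⊗ R) vec X = vec (R X Lᵀ)` summed over `i`.
-/

open Matrix Kronecker

/-- Column-stacking vectorization: for `X ∈ ℝ^{q×p}`, `vec X` is indexed by pairs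
`(j₁, j₂) ∈ [p]×[q]` with `vec X (j₁, j₂) = X j₂ j₁`. -/
def vec {a b : ℕ} (X : Matrix (Fin b) (Fin a) ℝ) : Fin a × Fin b → ℝ :=
  fun p => X p.2 p.1

/-- Matricization, the inverse of `vec`. -/
def mat {a b : ℕ} (x : Fin a × Fin b → ℝ) : Matrix (Fin b) (Fin a) ℝ :=
  fun j₂ j₁ => x (j₁, j₂)

theorem Matrix.exists_rank_factorization {K m n : Type*} [Field K] [Fintype n]
    (M : Matrix m n K) :
    ∃ (A : Matrix m (Fin M.rank) K) (B : Matrix (Fin M.rank) n K), M = A * B := by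
  set S := Submodule.span K (Set.range M.col)
  have : FiniteDimensional K S := FiniteDimensional.span_of_finite K (Set.finite_range M.col)
  let b : Module.Basis (Fin M.rank) K S :=
    Module.finBasisOfFinrankEq K S M.rank_eq_finrank_span_cols.symm
  have hcol (j : n) : M.col j ∈ S := Submodule.subset_span ⟨j, rfl⟩
  refine ⟨of fun i k => (b k : m → K) i, of fun k j => b.repr ⟨_, hcol j⟩ k, ?_⟩
  ext i j
  have hsum := congr_arg (fun v : S => (v : m → K) i) (b.sum_repr ⟨_, hcol j⟩)
  simp only [Submodule.coe_sum, Submodule.coe_smul, Finset.sum_apply, Pi.smul_apply,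
    smul_eq_mul] at hsum
  rw [show M i j = M.col j i from rfl, ← hsum, mul_apply]
  exact Finset.sum_congr rfl fun k _ => mul_comm _ _

section

variable {m₁ m₂ n₁ n₂ : ℕ} {ι : Type*} [Fintype ι]

theorem eq_sum_kronecker_of_rearrange_eq_mul {W : Matrix (Fin m₁ × Fin m₂) (Fin n₁ × Fin n₂) ℝ}
    {A : Matrix (Fin m₁ × Fin n₁) ι ℝ} {B : Matrix ι (Fin m₂ × Fin n₂) ℝ}
    (h : rearrange W = A * B) :
    W = ∑ k, (of fun i₁ j₁ => A (i₁, j₁) k) ⊗ₖ (of fun i₂ j₂ => B k (i₂, j₂)) := by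
  ext ⟨i₁, i₂⟩ ⟨j₁, j₂⟩
  simpa [rearrange, mul_apply, Matrix.sum_apply] using congr_fun (congr_fun h (i₁, j₁)) (i₂, j₂)

theorem sum_kronecker_mulVec (Ls : ι → Matrix (Fin m₁) (Fin n₁) ℝ)
    (Rs : ι → Matrix (Fin m₂) (Fin n₂) ℝ) (a : Fin n₁ × Fin n₂ → ℝ) :
    (∑ k, Ls k ⊗ₖ Rs k) *ᵥ a = _root_.vec (∑ k, Rs k * mat a * (Ls k)ᵀ) := by
  -- `_root_.vec` is definitionally Mathlib's `Matrix.vec`, and `Matrix.vec (mat a) = a` by `rfl`.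
  rw [sum_mulVec]
  exact (Finset.sum_congr rfl fun k _ => kronecker_mulVec_vec _ (mat a) _).trans
    (vec_sum _ _).symm

end

/-- Every `W ∈ ℝ^{m₁m₂×n₁n₂}` is exactly a sum of `r = rank(ℛ(W))` Kronecker products,
and consequently `W a = vec(Σᵢ R⁽ⁱ⁾ · mat(a) · L⁽ⁱ⁾ᵀ)` for every `a ∈ ℝ^{n₁n₂}`. -/
theorem exists_exact_kronecker_decomposition {m₁ m₂ n₁ n₂ : ℕ}
    (W : Matrix (Fin m₁ × Fin m₂) (Fin n₁ × Fin n₂) ℝ) :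
    ∃ (Ls : Fin ((rearrange W).rank) → Matrix (Fin m₁) (Fin n₁) ℝ)
      (Rs : Fin ((rearrange W).rank) → Matrix (Fin m₂) (Fin n₂) ℝ),
      W = ∑ i, Ls i ⊗ₖ Rs i ∧
      ∀ a : Fin n₁ × Fin n₂ → ℝ,
        W *ᵥ a = _root_.vec (∑ i, Rs i * mat a * (Ls i)ᵀ) := by
  obtain ⟨A, B, hAB⟩ := (rearrange W).exists_rank_factorization
  have hW := eq_sum_kronecker_of_rearrange_eq_mul hAB
  exact ⟨_, _, hW, fun a => (congrArg (· *ᵥ a) hW).trans (sum_kronecker_mulVec _ _ a)⟩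
end
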